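/- If G ∈ QT_4, then γ_t(G) ≤ a(G) + 1. -/

import Mathlib

open SimpleGraph

/-- The total domination number of a graph. -/
noncomputable def totalDominationNumber {V : Type*} (G : SimpleGraph V) : ℕ :=
  sInf {k | ∃ D : Finset V, (∀ v : V, ∃ u ∈ D, G.Adj v u) ∧ D.card = k}

/-- The annihilation number of a graph. -/
noncomputable def annihilationNumber {V : Type*} (G : SimpleGraph V) : ℕ :=
  sSup {k | ∃ S : Finset V, S.card = k ∧ ∑ v ∈ S, (G.neighborSet v).ncard ≤ G.edgeSet.ncard}

/-- Statuses used in the definition of the family `Γ`. -/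
inductive Status
  | A | B | C

/-- A graph whose vertices are labeled with statuses. -/
structure LGraph where
  V : Type
  G : SimpleGraph V
  sta : V → Status

/-- Status-preserving isomorphism of labeled graphs. -/
def LIso (L₁ L₂ : LGraph) : Prop :=
  ∃ e : L₁.G ≃g L₂.G, ∀ v, L₂.sta (e v) = L₁.sta v

/-- The base labeled tree `T₀`: a path `P₆` whose two leaves have status `C`,
whose two support vertices have status `A`, and whose middle vertices have status `B`. -/
def baseT0 : LGraph where
  V := Fin 6
  G := SimpleGraph.fromRel (fun i j => (i : ℕ) + 1 = (j : ℕ))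
  sta := ![Status.C, Status.A, Status.B, Status.B, Status.A, Status.C]

/-- Operation `o₁`: to a labeled graph `L` with chosen vertex `y`, attach a new path
`x–w–v–z` (the vertices `Sum.inr 0, 1, 2, 3`) together with the edge `x y`, statuses
`sta x = sta w = B`, `sta v = A`, `sta z = C`. -/
def o1Ext (L : LGraph) (y : L.V) : LGraph where
  V := L.V ⊕ Fin 4
  G := (L.G.map Function.Embedding.inl) ⊔
    SimpleGraph.fromEdgeSet
      {s(Sum.inl y, Sum.inr 0), s(Sum.inr 0, Sum.inr 1),
       s(Sum.inr 1, Sum.inr 2), s(Sum.inr 2, Sum.inr 3)}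
  sta := Sum.elim L.sta ![Status.B, Status.B, Status.A, Status.C]

/-- Operation `o₂`: to a labeled graph `L` with chosen vertex `y`, attach a new path
`x–w–v` (the vertices `Sum.inr 0, 1, 2`) together with the edge `x y`, statuses
`sta x = B`, `sta w = A`, `sta v = C`. -/
def o2Ext (L : LGraph) (y : L.V) : LGraph where
  V := L.V ⊕ Fin 3
  G := (L.G.map Function.Embedding.inl) ⊔
    SimpleGraph.fromEdgeSet
      {s(Sum.inl y, Sum.inr 0), s(Sum.inr 0, Sum.inr 1), s(Sum.inr 1, Sum.inr 2)}
  sta := Sum.elim L.sta ![Status.B, Status.A, Status.C]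

/-- The family `Γ` of labeled trees (closed under status-preserving isomorphism):
it contains `T₀` and is closed under operation `o₁` (applied at a leaf of status `C`)
and operation `o₂` (applied at a vertex of status `B`). -/
inductive InGamma : LGraph → Prop
  | base (L : LGraph) : LIso baseT0 L → InGamma L
  | op1 (L : LGraph) (y : L.V) (hL : InGamma L) (hsta : L.sta y = Status.C)
      (hleaf : (L.G.neighborSet y).ncard = 1) (L' : LGraph) (h : LIso (o1Ext L y) L') :
      InGamma L'
  | op2 (L : LGraph) (y : L.V) (hL : InGamma L) (hsta : L.sta y = Status.B)
      (L' : LGraph) (h : LIso (o2Ext L y) L') : InGamma L'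

/-- Add one new vertex `h = Sum.inr ()` to `G` and join it to every vertex in `S`. -/
def attachVertex {V : Type} (G : SimpleGraph V) (S : Set V) : SimpleGraph (V ⊕ Unit) :=
  (G.map Function.Embedding.inl) ⊔
    SimpleGraph.fromEdgeSet {e | ∃ u ∈ S, e = s(Sum.inl u, Sum.inr ())}


/-!
Along the recursive construction of `Γ` one carries a total dominating set `D` and a set `S`
of vertices of status other than `B` with `|D| ≤ |S| + 1` whose degree sum is at most the
number of edges. An `o₂` step puts `x, w` into `D` and `w, v` into `S`, an `o₁` step puts
`w, v` into `D` and `v, z` into `S`; in both cases the new edges pay for the new degrees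
(the only old vertex whose degree grows is `y`, which is not in `S` for `o₂`).
For `G ∈ QT₄` take `D ∪ {x, w}` and `S ∪ {v, h}`: as `h` has at least two neighbours among
`x, w, v`, one of them is `x` or `w`, and the `t` edges at `h` pay for `deg h = t`, while
`deg v ≤ 2` is paid for by the three edges of the last `o₂` step.
-/

open Function Sum Finset

section Domination

variable {V : Type*} {G : SimpleGraph V}

def IsTotalDominatingSet (G : SimpleGraph V) (D : Finset V) : Prop :=
  ∀ v, ∃ u ∈ D, G.Adj v u

lemma totalDominationNumber_le_card {D : Finset V} (hD : IsTotalDominatingSet G D) :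
    totalDominationNumber G ≤ D.card :=
  Nat.sInf_le ⟨D, hD, rfl⟩

lemma card_le_annihilationNumber [Finite V] {S : Finset V}
    (hS : ∑ v ∈ S, (G.neighborSet v).ncard ≤ G.edgeSet.ncard) :
    S.card ≤ annihilationNumber G := by
  have := Fintype.ofFinite V
  refine le_csSup ⟨Fintype.card V, ?_⟩ ⟨S, rfl, hS⟩
  rintro k ⟨S', rfl, -⟩
  exact S'.card_le_univ

lemma totalDominationNumber_le_annihilationNumber_add_one [Finite V] {D S : Finset V}
    (hD : IsTotalDominatingSet G D)
    (hS : ∑ v ∈ S, (G.neighborSet v).ncard ≤ G.edgeSet.ncard) (hcard : D.card ≤ S.card + 1) :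
    totalDominationNumber G ≤ annihilationNumber G + 1 :=
  (totalDominationNumber_le_card hD).trans <|
    hcard.trans (Nat.add_le_add_right (card_le_annihilationNumber hS) 1)

end Domination

namespace SimpleGraph.Iso

variable {V V' : Type*} {G : SimpleGraph V} {G' : SimpleGraph V'}

lemma ncard_neighborSet (e : G ≃g G') (v : V) :
    (G'.neighborSet (e v)).ncard = (G.neighborSet v).ncard := by
  rw [← Nat.card_coe_set_eq, ← Nat.card_coe_set_eq]
  exact Nat.card_congr (e.mapNeighborSet v).symm

lemma ncard_edgeSet (e : G ≃g G') : G'.edgeSet.ncard = G.edgeSet.ncard := by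
  rw [← Nat.card_coe_set_eq, ← Nat.card_coe_set_eq]
  exact Nat.card_congr e.mapEdgeSet.symm

lemma isTotalDominatingSet_map (e : G ≃g G') {D : Finset V} (hD : IsTotalDominatingSet G D) :
    IsTotalDominatingSet G' (D.map e.toEquiv.toEmbedding) := by
  intro v
  obtain ⟨u, hu, hadj⟩ := hD (e.symm v)
  exact ⟨e u, mem_map_of_mem _ hu, by simpa using e.map_adj_iff.mpr hadj⟩

end SimpleGraph.Iso

namespace SimpleGraph

variable {V W : Type*}

/-- `o1Ext`, `o2Ext` and `attachVertex` are all of this form by definition, so the lemmas below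
apply to them directly. -/
def extendSum (G : SimpleGraph V) (E : Set (Sym2 (V ⊕ W))) : SimpleGraph (V ⊕ W) :=
  G.map Embedding.inl ⊔ fromEdgeSet E

variable (G : SimpleGraph V) {E : Set (Sym2 (V ⊕ W))}

lemma extendSum_adj_inl {a b : V} (h : G.Adj a b) : (G.extendSum E).Adj (inl a) (inl b) :=
  Or.inl <| (map_adj _ _ _ _).mpr ⟨a, b, h, rfl, rfl⟩

lemma extendSum_adj_of_mem {u v : V ⊕ W} (h : s(u, v) ∈ E) (hne : u ≠ v) :
    (G.extendSum E).Adj u v :=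
  Or.inr ⟨h, hne⟩

lemma neighborSet_extendSum_inl (hE : ∀ e ∈ E, ¬e.IsDiag) (a : V) :
    (G.extendSum E).neighborSet (inl a) = inl '' G.neighborSet a ∪ {b | s(inl a, b) ∈ E} := by
  ext b
  simp only [extendSum, mem_neighborSet, sup_adj, map_adj, fromEdgeSet_adj, Embedding.inl_apply,
    Set.mem_union, Set.mem_image, Set.mem_ofPred_eq, inl.injEq]
  constructor
  · rintro (⟨u, v, h, rfl, rfl⟩ | ⟨he, -⟩)
    exacts [Or.inl ⟨v, h, rfl⟩, Or.inr he]
  · rintro (⟨v, h, rfl⟩ | he)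
    exacts [Or.inl ⟨a, v, h, rfl, rfl⟩,
      Or.inr ⟨he, fun hab => hE _ he (hab ▸ Sym2.mk_isDiag_iff.mpr rfl)⟩]

lemma neighborSet_extendSum_inr (hE : ∀ e ∈ E, ¬e.IsDiag) (w : W) :
    (G.extendSum E).neighborSet (inr w) = {b | s(inr w, b) ∈ E} := by
  ext b
  simp only [extendSum, mem_neighborSet, sup_adj, map_adj, fromEdgeSet_adj, Embedding.inl_apply,
    Set.mem_ofPred_eq, reduceCtorEq, false_and, and_false, exists_false, false_or]
  exact ⟨And.left, fun he => ⟨he, fun hab => hE _ he (hab ▸ Sym2.mk_isDiag_iff.mpr rfl)⟩⟩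

lemma ncard_neighborSet_extendSum_inl_le (hE : ∀ e ∈ E, ¬e.IsDiag) (a : V) :
    ((G.extendSum E).neighborSet (inl a)).ncard ≤
      (G.neighborSet a).ncard + {b | s(inl a, b) ∈ E}.ncard := by
  rw [neighborSet_extendSum_inl G hE]
  exact (Set.ncard_union_le _ _).trans_eq (by rw [Set.ncard_image_of_injective _ inl_injective])

lemma ncard_neighborSet_extendSum_inl (hE : ∀ e ∈ E, ¬e.IsDiag) {a : V}
    (ha : ∀ b, s(inl a, b) ∉ E) :
    ((G.extendSum E).neighborSet (inl a)).ncard = (G.neighborSet a).ncard := by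
  have hnew : {b | s(inl a, b) ∈ E} = ∅ := Set.eq_empty_of_forall_notMem ha
  rw [neighborSet_extendSum_inl G hE, hnew, Set.union_empty,
    Set.ncard_image_of_injective _ inl_injective]

lemma ncard_neighborSet_extendSum_inr (hE : ∀ e ∈ E, ¬e.IsDiag) (w : W) :
    ((G.extendSum E).neighborSet (inr w)).ncard = {b | s(inr w, b) ∈ E}.ncard := by
  rw [neighborSet_extendSum_inr G hE]

lemma ncard_edgeSet_extendSum [Finite V] [Finite W] (hE : ∀ e ∈ E, ¬e.IsDiag)
    (hEW : ∀ e ∈ E, ∃ w, inr w ∈ e) :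
    (G.extendSum E).edgeSet.ncard = G.edgeSet.ncard + E.ncard := by
  have hdisj : Disjoint (Embedding.inl.sym2Map '' G.edgeSet) E := by
    rw [Set.disjoint_left]
    rintro _ ⟨e, -, rfl⟩ he
    obtain ⟨w, hw⟩ := hEW _ he
    obtain ⟨v, -, hv⟩ := Sym2.mem_map.mp hw
    exact inl_ne_inr hv
  have hdiag : E \ Sym2.diagSet = E :=
    sdiff_eq_left.mpr <| Set.disjoint_left.mpr fun e he hd => hE e he (Sym2.mem_diagSet.mp hd)
  rw [extendSum, edgeSet_sup, edgeSet_map, edgeSet_fromEdgeSet, hdiag, Set.ncard_union_eq hdisj,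
    Set.ncard_image_of_injective _ Embedding.inl.sym2Map.injective]

variable {G}

lemma IsTotalDominatingSet.extendSum {D : Finset V} (hD : IsTotalDominatingSet G D)
    {R : Finset W} (hR : ∀ w, ∃ u ∈ D.disjSum R, (G.extendSum E).Adj (inr w) u) :
    IsTotalDominatingSet (G.extendSum E) (D.disjSum R) := by
  rintro (a | w)
  · obtain ⟨u, hu, hadj⟩ := hD a
    exact ⟨inl u, inl_mem_disjSum.mpr hu, extendSum_adj_inl G hadj⟩
  · exact hR w

end SimpleGraph

/-- Excluding status `B` from `S` is what lets `o₂`, which raises the degree of a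
`B`-vertex, keep the degree sum over `S` under control. -/
structure IsDomAnnPair (L : LGraph) (D S : Finset L.V) : Prop where
  isTotalDominatingSet : IsTotalDominatingSet L.G D
  sta_ne_B : ∀ v ∈ S, L.sta v ≠ .B
  card_le : D.card ≤ S.card + 1
  sum_ncard_neighborSet_le : ∑ v ∈ S, (L.G.neighborSet v).ncard ≤ L.G.edgeSet.ncard

lemma LIso.finite {L₁ L₂ : LGraph} (h : LIso L₁ L₂) (h₁ : Finite L₁.V) : Finite L₂.V :=
  let ⟨e, _⟩ := h
  Finite.of_equiv _ e.toEquiv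

lemma IsDomAnnPair.of_lIso {L₁ L₂ : LGraph} (h : LIso L₁ L₂) {D S : Finset L₁.V}
    (hp : IsDomAnnPair L₁ D S) : ∃ D' S', IsDomAnnPair L₂ D' S' := by
  obtain ⟨e, hsta⟩ := h
  refine ⟨D.map e.toEquiv.toEmbedding, S.map e.toEquiv.toEmbedding,
    e.isTotalDominatingSet_map hp.isTotalDominatingSet, ?_, by simpa using hp.card_le, ?_⟩
  · simp only [mem_map]
    rintro _ ⟨v, hv, rfl⟩
    exact (hsta v).trans_ne (hp.sta_ne_B v hv)
  · simpa [e.ncard_neighborSet, e.ncard_edgeSet] using hp.sum_ncard_neighborSet_le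

lemma exists_isDomAnnPair_baseT0 : ∃ D S, IsDomAnnPair baseT0 D S := by
  refine ⟨({1, 2, 3, 4} : Finset (Fin 6)), ({0, 1, 5} : Finset (Fin 6)), ⟨?_, ?_, by decide, ?_⟩⟩
  · show ∀ v : Fin 6, ∃ u ∈ ({1, 2, 3, 4} : Finset (Fin 6)),
      (fromRel fun i j : Fin 6 => (i : ℕ) + 1 = j).Adj v u
    decide
  · intro v hv
    fin_cases hv <;> nofun
  · show ∑ v ∈ ({0, 1, 5} : Finset (Fin 6)),
        ((fromRel fun i j : Fin 6 => (i : ℕ) + 1 = j).neighborSet v).ncard ≤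
      (fromRel fun i j : Fin 6 => (i : ℕ) + 1 = j).edgeSet.ncard
    simp only [Set.ncard_eq_toFinset_card']
    decide

section o2Ext

variable (L : LGraph) (y : L.V)

lemma o2Ext_edges_not_isDiag :
    ∀ e ∈ ({s(inl y, inr 0), s(inr 0, inr 1), s(inr 1, inr 2)} : Set (Sym2 (L.V ⊕ Fin 3))),
      ¬e.IsDiag := by
  simp

lemma o2Ext_ncard_edgeSet [Finite L.V] :
    (o2Ext L y).G.edgeSet.ncard = L.G.edgeSet.ncard + 3 :=
  (ncard_edgeSet_extendSum L.G (o2Ext_edges_not_isDiag L y) (by simp)).trans <| by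
    rw [Set.ncard_eq_three.mpr ⟨_, _, _, by simp, by simp, by simp, rfl⟩]

lemma o2Ext_ncard_neighborSet_inl {a : L.V} (ha : a ≠ y) :
    ((o2Ext L y).G.neighborSet (inl a)).ncard = (L.G.neighborSet a).ncard :=
  ncard_neighborSet_extendSum_inl _ (o2Ext_edges_not_isDiag L y) (by simp [ha])

lemma o2Ext_ncard_neighborSet_w : ((o2Ext L y).G.neighborSet (inr 1)).ncard = 2 :=
  (ncard_neighborSet_extendSum_inr L.G (o2Ext_edges_not_isDiag L y) 1).trans <|
    Set.ncard_eq_two.mpr ⟨inr 0, inr 2, by simp, by ext; simp⟩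

lemma o2Ext_ncard_neighborSet_v : ((o2Ext L y).G.neighborSet (inr 2)).ncard = 1 :=
  (ncard_neighborSet_extendSum_inr L.G (o2Ext_edges_not_isDiag L y) 2).trans <|
    Set.ncard_eq_one.mpr ⟨inr 1, by ext; simp⟩

variable {L y}

lemma isTotalDominatingSet_o2Ext {D : Finset L.V} (hD : IsTotalDominatingSet L.G D) :
    IsTotalDominatingSet (o2Ext L y).G (D.disjSum {0, 1}) := by
  refine hD.extendSum fun w => ?_
  fin_cases w
  exacts [⟨inr 1, by simp, extendSum_adj_of_mem _ (by simp) (by simp)⟩,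
    ⟨inr 0, by simp, extendSum_adj_of_mem _ (by simp) (by simp)⟩,
    ⟨inr 1, by simp, extendSum_adj_of_mem _ (by simp) (by simp)⟩]

lemma isDomAnnPair_o2Ext [Finite L.V] {D S : Finset L.V} (hp : IsDomAnnPair L D S)
    (hy : L.sta y = .B) :
    IsDomAnnPair (o2Ext L y) (D.disjSum {0, 1}) (S.disjSum {1, 2}) := by
  refine ⟨isTotalDominatingSet_o2Ext hp.isTotalDominatingSet, ?_, ?_, ?_⟩
  · rintro (a | w) hv
    · exact hp.sta_ne_B a (inl_mem_disjSum.mp hv)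
    · have hw : w ∈ ({1, 2} : Finset (Fin 3)) := inr_mem_disjSum.mp hv
      fin_cases w <;> simp [o2Ext] at hw ⊢
  · change #(D.disjSum {0, 1}) ≤ #(S.disjSum {1, 2}) + 1
    rw [card_disjSum, card_disjSum, card_pair (by decide), card_pair (by decide)]
    exact Nat.add_le_add_right hp.card_le 2
  · have hS : ∑ a ∈ S, ((o2Ext L y).G.neighborSet (inl a)).ncard =
        ∑ a ∈ S, (L.G.neighborSet a).ncard :=
      sum_congr rfl fun a ha =>
        o2Ext_ncard_neighborSet_inl L y fun hay => hp.sta_ne_B a ha (hay ▸ hy)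
    calc ∑ v ∈ S.disjSum {1, 2}, ((o2Ext L y).G.neighborSet v).ncard
        = ∑ a ∈ S, ((o2Ext L y).G.neighborSet (inl a)).ncard +
            (((o2Ext L y).G.neighborSet (inr 1)).ncard +
              ((o2Ext L y).G.neighborSet (inr 2)).ncard) := by
          rw [sum_disjSum, sum_pair (by decide)]
      _ ≤ L.G.edgeSet.ncard + 3 := by
          rw [hS, o2Ext_ncard_neighborSet_w, o2Ext_ncard_neighborSet_v]
          exact Nat.add_le_add_right hp.sum_ncard_neighborSet_le 3
      _ = (o2Ext L y).G.edgeSet.ncard := (o2Ext_ncard_edgeSet L y).symm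

end o2Ext

section o1Ext

open scoped Classical

variable (L : LGraph) (y : L.V)

lemma o1Ext_edges_not_isDiag :
    ∀ e ∈ ({s(inl y, inr 0), s(inr 0, inr 1), s(inr 1, inr 2), s(inr 2, inr 3)} :
      Set (Sym2 (L.V ⊕ Fin 4))), ¬e.IsDiag := by
  simp

lemma o1Ext_ncard_edgeSet [Finite L.V] :
    (o1Ext L y).G.edgeSet.ncard = L.G.edgeSet.ncard + 4 :=
  (ncard_edgeSet_extendSum L.G (o1Ext_edges_not_isDiag L y) (by simp)).trans <| by
    rw [Set.ncard_eq_four.mpr ⟨_, _, _, _, by simp, by simp, by simp, by simp, by simp, by simp, rfl⟩]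

lemma o1Ext_ncard_neighborSet_inl_le (a : L.V) :
    ((o1Ext L y).G.neighborSet (inl a)).ncard ≤
      (L.G.neighborSet a).ncard + if a = y then 1 else 0 := by
  refine (ncard_neighborSet_extendSum_inl_le L.G (o1Ext_edges_not_isDiag L y) a).trans
    (Nat.add_le_add_left ?_ _)
  split_ifs with ha
  · subst ha
    exact (Set.ncard_le_ncard (t := {inr 0}) (by intro b; simp)).trans (Set.ncard_singleton _).le
  · simp [ha]

lemma o1Ext_ncard_neighborSet_v : ((o1Ext L y).G.neighborSet (inr 2)).ncard = 2 :=
  (ncard_neighborSet_extendSum_inr L.G (o1Ext_edges_not_isDiag L y) 2).trans <|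
    Set.ncard_eq_two.mpr ⟨inr 1, inr 3, by simp, by ext; simp⟩

lemma o1Ext_ncard_neighborSet_z : ((o1Ext L y).G.neighborSet (inr 3)).ncard = 1 :=
  (ncard_neighborSet_extendSum_inr L.G (o1Ext_edges_not_isDiag L y) 3).trans <|
    Set.ncard_eq_one.mpr ⟨inr 2, by ext; simp⟩

variable {L y}

lemma isTotalDominatingSet_o1Ext {D : Finset L.V} (hD : IsTotalDominatingSet L.G D) :
    IsTotalDominatingSet (o1Ext L y).G (D.disjSum {1, 2}) := by
  refine hD.extendSum fun w => ?_
  fin_cases w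
  exacts [⟨inr 1, by simp, extendSum_adj_of_mem _ (by simp) (by simp)⟩,
    ⟨inr 2, by simp, extendSum_adj_of_mem _ (by simp) (by simp)⟩,
    ⟨inr 1, by simp, extendSum_adj_of_mem _ (by simp) (by simp)⟩,
    ⟨inr 2, by simp, extendSum_adj_of_mem _ (by simp) (by simp)⟩]

lemma isDomAnnPair_o1Ext [Finite L.V] {D S : Finset L.V} (hp : IsDomAnnPair L D S) :
    IsDomAnnPair (o1Ext L y) (D.disjSum {1, 2}) (S.disjSum {2, 3}) := by
  refine ⟨isTotalDominatingSet_o1Ext hp.isTotalDominatingSet, ?_, ?_, ?_⟩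
  · rintro (a | w) hv
    · exact hp.sta_ne_B a (inl_mem_disjSum.mp hv)
    · have hw : w ∈ ({2, 3} : Finset (Fin 4)) := inr_mem_disjSum.mp hv
      fin_cases w <;> simp [o1Ext] at hw ⊢
  · change #(D.disjSum {1, 2}) ≤ #(S.disjSum {2, 3}) + 1
    rw [card_disjSum, card_disjSum, card_pair (by decide), card_pair (by decide)]
    exact Nat.add_le_add_right hp.card_le 2
  · have hS : ∑ a ∈ S, ((o1Ext L y).G.neighborSet (inl a)).ncard ≤
        ∑ a ∈ S, (L.G.neighborSet a).ncard + 1 :=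
      calc ∑ a ∈ S, ((o1Ext L y).G.neighborSet (inl a)).ncard
          ≤ ∑ a ∈ S, ((L.G.neighborSet a).ncard + if a = y then 1 else 0) :=
            sum_le_sum fun a _ => o1Ext_ncard_neighborSet_inl_le L y a
        _ ≤ ∑ a ∈ S, (L.G.neighborSet a).ncard + 1 := by
            rw [sum_add_distrib, sum_ite_eq']
            split_ifs <;> omega
    calc ∑ v ∈ S.disjSum {2, 3}, ((o1Ext L y).G.neighborSet v).ncard
        = ∑ a ∈ S, ((o1Ext L y).G.neighborSet (inl a)).ncard +
            (((o1Ext L y).G.neighborSet (inr 2)).ncard +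
              ((o1Ext L y).G.neighborSet (inr 3)).ncard) := by
          rw [sum_disjSum, sum_pair (by decide)]
      _ ≤ L.G.edgeSet.ncard + 4 := by
          rw [o1Ext_ncard_neighborSet_v, o1Ext_ncard_neighborSet_z]
          have := hp.sum_ncard_neighborSet_le
          omega
      _ = (o1Ext L y).G.edgeSet.ncard := (o1Ext_ncard_edgeSet L y).symm

end o1Ext

lemma InGamma.finite {L : LGraph} (h : InGamma L) : Finite L.V := by
  induction h with
  | base _ h => exact h.finite (inferInstanceAs (Finite (Fin 6)))
  | op1 L _ _ _ _ _ h _ => exact h.finite (inferInstanceAs (Finite (L.V ⊕ Fin 4)))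
  | op2 L _ _ _ _ h _ => exact h.finite (inferInstanceAs (Finite (L.V ⊕ Fin 3)))

lemma InGamma.exists_isDomAnnPair {L : LGraph} (h : InGamma L) : ∃ D S, IsDomAnnPair L D S := by
  induction h with
  | base _ h =>
    obtain ⟨D, S, hp⟩ := exists_isDomAnnPair_baseT0
    exact hp.of_lIso h
  | op1 _ _ hL _ _ _ h ih =>
    have := hL.finite
    obtain ⟨D, S, hp⟩ := ih
    exact (isDomAnnPair_o1Ext hp).of_lIso h
  | op2 _ _ hL hy _ h ih =>
    have := hL.finite
    obtain ⟨D, S, hp⟩ := ih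
    exact (isDomAnnPair_o2Ext hp hy).of_lIso h

section attachVertex

variable {V : Type} (G : SimpleGraph V) (A : Set V)

lemma attachVertex_edges_not_isDiag : ∀ e ∈ {e | ∃ u ∈ A, e = s(inl u, inr ())}, ¬e.IsDiag := by
  rintro _ ⟨u, -, rfl⟩
  simp

lemma attachVertex_ncard_edgeSet [Finite V] :
    (attachVertex G A).edgeSet.ncard = G.edgeSet.ncard + A.ncard := by
  have hE : {e | ∃ u ∈ A, e = s(inl u, inr ())} = (fun u => s(inl u, inr ())) '' A := by
    ext
    simp [eq_comm]
  refine (ncard_edgeSet_extendSum G (attachVertex_edges_not_isDiag A) ?_).trans ?_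
  · rintro _ ⟨u, -, rfl⟩
    exact ⟨(), by simp⟩
  · rw [hE, Set.ncard_image_of_injective _ fun u v huv => by simpa using huv]

lemma attachVertex_ncard_neighborSet_inl_le (u : V) :
    ((attachVertex G A).neighborSet (inl u)).ncard ≤ (G.neighborSet u).ncard + 1 :=
  (ncard_neighborSet_extendSum_inl_le G (attachVertex_edges_not_isDiag A) u).trans <|
    Nat.add_le_add_left ((Set.ncard_le_ncard (t := {inr ()}) (by intro b; simp)).trans
      (Set.ncard_singleton _).le) _

lemma attachVertex_ncard_neighborSet_inl_of_notMem {u : V} (hu : u ∉ A) :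
    ((attachVertex G A).neighborSet (inl u)).ncard = (G.neighborSet u).ncard :=
  ncard_neighborSet_extendSum_inl G (attachVertex_edges_not_isDiag A) (by simpa using hu)

lemma attachVertex_ncard_neighborSet_inr :
    ((attachVertex G A).neighborSet (inr ())).ncard = A.ncard :=
  (ncard_neighborSet_extendSum_inr G (attachVertex_edges_not_isDiag A) ()).trans <| by
    rw [← Set.ncard_image_of_injective A inl_injective]
    congr 1
    ext
    simp [eq_comm]

variable {G A}

lemma IsTotalDominatingSet.attachVertex {D : Finset V} (hD : IsTotalDominatingSet G D)
    (hA : ∃ u ∈ D, u ∈ A) : IsTotalDominatingSet (attachVertex G A) (D.map Embedding.inl) := by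
  rintro (a | ⟨⟩)
  · obtain ⟨u, hu, hadj⟩ := hD a
    exact ⟨inl u, mem_map_of_mem _ hu, extendSum_adj_inl G hadj⟩
  · obtain ⟨u, hu, huA⟩ := hA
    exact ⟨inl u, mem_map_of_mem _ hu, extendSum_adj_of_mem G ⟨u, huA, Sym2.eq_swap⟩ (by simp)⟩

end attachVertex

lemma sum_ncard_neighborSet_attachVertex_o2Ext_le {L : LGraph} [Finite L.V] {y : L.V}
    {S : Finset L.V} (hyS : y ∉ S)
    (hS : ∑ v ∈ S, (L.G.neighborSet v).ncard ≤ L.G.edgeSet.ncard)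
    {A : Set (o2Ext L y).V} (hA : ∀ a, inl a ∉ A) :
    ∑ v ∈ (S.disjSum {2}).disjSum {()}, ((attachVertex (o2Ext L y).G A).neighborSet v).ncard ≤
      (attachVertex (o2Ext L y).G A).edgeSet.ncard := by
  have : Finite (o2Ext L y).V := inferInstanceAs (Finite (L.V ⊕ Fin 3))
  set H := attachVertex (o2Ext L y).G A
  have hold : ∀ a ∈ S, (H.neighborSet (inl (inl a))).ncard = (L.G.neighborSet a).ncard :=
    fun a ha => (attachVertex_ncard_neighborSet_inl_of_notMem _ _ (hA a)).trans
      (o2Ext_ncard_neighborSet_inl L y (ne_of_mem_of_not_mem ha hyS))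
  have hv : (H.neighborSet (inl (inr 2))).ncard ≤ 2 :=
    (attachVertex_ncard_neighborSet_inl_le _ _ _).trans (by rw [o2Ext_ncard_neighborSet_v])
  calc ∑ v ∈ (S.disjSum {2}).disjSum {()}, (H.neighborSet v).ncard
      = ∑ a ∈ S, (H.neighborSet (inl (inl a))).ncard + (H.neighborSet (inl (inr 2))).ncard +
          (H.neighborSet (inr ())).ncard := by
        rw [sum_disjSum, sum_disjSum, sum_singleton, sum_singleton]
        rfl
    _ ≤ L.G.edgeSet.ncard + 2 + A.ncard := by
        rw [sum_congr rfl hold, attachVertex_ncard_neighborSet_inr]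
        omega
    _ ≤ H.edgeSet.ncard := by
        rw [attachVertex_ncard_edgeSet, o2Ext_ncard_edgeSet]
        omega

/-- If `G ∈ QT₄`, i.e. `G` is obtained from a tree `T' = o2Ext T y ∈ Γ₂`
(where `T ∈ Γ`, `y` has status `B`, and `x, w, v` are the vertices added in the last
step) and a new vertex `h` by adding `t ≥ 2` edges between `h` and `{x, w, v}`, then
`γₜ(G) ≤ a(G) + 1`. -/
theorem stmt_4 (T : LGraph) (y : T.V)
    (hT : InGamma T) (hy : T.sta y = Status.B)
    (N : Finset (Fin 3)) (htN : 2 ≤ N.card)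
    (G : SimpleGraph ((T.V ⊕ Fin 3) ⊕ Unit))
    (hG : G = attachVertex (o2Ext T y).G (Sum.inr '' (N : Set (Fin 3)))) :
    totalDominationNumber G ≤ annihilationNumber G + 1 := by
  have := hT.finite
  obtain ⟨D, S, hp⟩ := hT.exists_isDomAnnPair
  obtain ⟨i, hiN, hi⟩ := N.exists_mem_ne htN 2
  have hi01 : i ∈ ({0, 1} : Finset (Fin 3)) := by fin_cases i <;> simp at hi ⊢
  subst hG
  refine totalDominationNumber_le_annihilationNumber_add_one
    (D := (D.disjSum {0, 1}).map Embedding.inl) (S := (S.disjSum {2}).disjSum {()})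
    ((isTotalDominatingSet_o2Ext hp.isTotalDominatingSet).attachVertex
      ⟨inr i, inr_mem_disjSum.mpr hi01, i, hiN, rfl⟩)
    (sum_ncard_neighborSet_attachVertex_o2Ext_le (fun h => hp.sta_ne_B y h hy)
      hp.sum_ncard_neighborSet_le fun _ ⟨_, _, h⟩ => inr_ne_inl h) ?_
  have := hp.card_le
  simp only [card_map, card_disjSum, card_singleton, card_pair (by decide : (0 : Fin 3) ≠ 1)]
  omega
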